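/- For every σ > 0 and κ > 0, the first independent-equals moment of the coupled exponential density equals its scale: (∫₀^∞ x·p(x)^((1+2κ)/(1+κ)) dx) / (∫₀^∞ p(x)^((1+2κ)/(1+κ)) dx) = σ, where p(x) = (1/σ)·(1 + κ·x/σ)^(−(1+κ)/κ). In particular this generalized mean is finite for every κ > 0, even when κ ≥ 1 and the ordinary mean ∫ x·p(x) dx diverges. -/

import Mathlib

open Real MeasureTheory Set Filter Topology

/-
Raising `p(x) = σ⁻¹ (1 + κx/σ)^(-(1+κ)/κ)` to `q = (1+2κ)/(1+κ)` gives a constant multiple of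
`(1 + a x)^t` with `a = κ/σ` and `t = -(1+2κ)/κ < -2`. Both `∫₀^∞ (1 + a x)^t` and
`∫₀^∞ x (1 + a x)^t` are elementary (write `x = ((1 + a x) - 1)/a`), and their ratio is
`-1/(a (t+2)) = σ`, since `t + 2 = -1/κ`.
-/

section OneAddMulRpow

variable {a t : ℝ}

lemma one_add_mul_pos (ha : 0 ≤ a) {x : ℝ} (hx : 0 ≤ x) : 0 < 1 + a * x :=
  add_pos_of_pos_of_nonneg one_pos (mul_nonneg ha hx)

lemma hasDerivAt_one_add_mul_rpow_div (ha : a ≠ 0) (ht : t ≠ -1) {x : ℝ} (hx : 0 < 1 + a * x) :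
    HasDerivAt (fun x => (1 + a * x) ^ (t + 1) / (a * (t + 1))) ((1 + a * x) ^ t) x := by
  have hlin : HasDerivAt (fun x : ℝ => 1 + a * x) a x := by
    simpa using ((hasDerivAt_id x).const_mul a).const_add 1
  refine (((hasDerivAt_rpow_const (p := t + 1) (Or.inl hx.ne')).comp x hlin).div_const
    (a * (t + 1))).congr_deriv ?_
  have ht' : t + 1 ≠ 0 := fun h => ht (by linarith)
  rw [add_sub_cancel_right]
  field_simp

lemma tendsto_one_add_mul_rpow_div_atTop (ha : 0 < a) (ht : t < -1) :
    Tendsto (fun x => (1 + a * x) ^ (t + 1) / (a * (t + 1))) atTop (𝓝 0) := by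
  have hlin : Tendsto (fun x : ℝ => 1 + a * x) atTop atTop :=
    tendsto_atTop_add_const_left _ 1 (tendsto_id.const_mul_atTop ha)
  have hpow := (tendsto_rpow_neg_atTop (by linarith : 0 < -(t + 1))).comp hlin
  simp only [neg_neg, Function.comp_def] at hpow
  simpa using hpow.div_const (a * (t + 1))

lemma integrableOn_Ioi_one_add_mul_rpow (ha : 0 < a) (ht : t < -1) :
    IntegrableOn (fun x => (1 + a * x) ^ t) (Ioi 0) :=
  integrableOn_Ioi_deriv_of_nonneg'
    (fun _ hx => hasDerivAt_one_add_mul_rpow_div ha.ne' ht.ne (one_add_mul_pos ha.le hx))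
    (fun _ hx => (rpow_pos_of_pos (one_add_mul_pos ha.le (le_of_lt hx)) t).le)
    (tendsto_one_add_mul_rpow_div_atTop ha ht)

lemma integral_Ioi_one_add_mul_rpow (ha : 0 < a) (ht : t < -1) :
    ∫ x in Ioi 0, (1 + a * x) ^ t = -1 / (a * (t + 1)) := by
  rw [integral_Ioi_of_hasDerivAt_of_tendsto'
    (fun _ hx => hasDerivAt_one_add_mul_rpow_div ha.ne' ht.ne (one_add_mul_pos ha.le hx))
    (integrableOn_Ioi_one_add_mul_rpow ha ht) (tendsto_one_add_mul_rpow_div_atTop ha ht)]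
  simp only [mul_zero, add_zero, one_rpow]
  ring

lemma integral_Ioi_mul_one_add_mul_rpow (ha : 0 < a) (ht : t < -2) :
    ∫ x in Ioi 0, x * (1 + a * x) ^ t = 1 / (a ^ 2 * (t + 1) * (t + 2)) := by
  have hsplit : EqOn (fun x => x * (1 + a * x) ^ t)
      (fun x => a⁻¹ * (1 + a * x) ^ (t + 1) - a⁻¹ * (1 + a * x) ^ t) (Ioi 0) := by
    intro x hx
    dsimp only
    rw [rpow_add_one (one_add_mul_pos ha.le (le_of_lt hx)).ne']
    field_simp
    ring
  rw [setIntegral_congr_fun measurableSet_Ioi hsplit,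
    integral_sub ((integrableOn_Ioi_one_add_mul_rpow ha (by linarith)).const_mul _)
      ((integrableOn_Ioi_one_add_mul_rpow ha (by linarith)).const_mul _),
    integral_const_mul, integral_const_mul, integral_Ioi_one_add_mul_rpow ha (by linarith),
    integral_Ioi_one_add_mul_rpow ha (by linarith), add_assoc, one_add_one_eq_two]
  have h1 : t + 1 ≠ 0 := by linarith
  have h2 : t + 2 ≠ 0 := by linarith
  field_simp
  ring

lemma integral_Ioi_mul_one_add_mul_rpow_div_integral (ha : 0 < a) (ht : t < -2) :
    (∫ x in Ioi 0, x * (1 + a * x) ^ t) / ∫ x in Ioi 0, (1 + a * x) ^ t = -1 / (a * (t + 2)) := by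
  rw [integral_Ioi_mul_one_add_mul_rpow ha ht, integral_Ioi_one_add_mul_rpow ha (by linarith)]
  have h1 : t + 1 ≠ 0 := by linarith
  have h2 : t + 2 ≠ 0 := by linarith
  field_simp

end OneAddMulRpow

lemma coupledExp_rpow {σ κ x : ℝ} (hσ : 0 ≤ σ) (hx : 0 ≤ 1 + κ * x / σ) (q : ℝ) :
    ((1 / σ) * (1 + κ * x / σ) ^ (-(1 + κ) / κ)) ^ q
      = (1 / σ) ^ q * (1 + κ / σ * x) ^ (-(1 + κ) / κ * q) := by
  rw [mul_rpow (by positivity) (rpow_nonneg hx _), ← rpow_mul hx, mul_div_right_comm]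

/-- The first independent-equals moment of the coupled exponential density equals
its scale: `(∫₀^∞ x·p(x)^((1+2κ)/(1+κ)) dx)/(∫₀^∞ p(x)^((1+2κ)/(1+κ)) dx) = σ`,
where `p(x) = (1/σ)·(1 + κ·x/σ)^(−(1+κ)/κ)`.  This generalized mean is finite for
every `κ > 0`, even when the ordinary mean diverges. -/
theorem stmt_6 (σ κ : ℝ) (hσ : 0 < σ) (hκ : 0 < κ) :
    (∫ x in Set.Ioi (0 : ℝ),
        x * ((1 / σ) * (1 + κ * x / σ) ^ (-(1 + κ) / κ)) ^ ((1 + 2 * κ) / (1 + κ))) /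
      (∫ x in Set.Ioi (0 : ℝ),
        ((1 / σ) * (1 + κ * x / σ) ^ (-(1 + κ) / κ)) ^ ((1 + 2 * κ) / (1 + κ)))
      = σ := by
  set q := (1 + 2 * κ) / (1 + κ)
  set t := -(1 + κ) / κ * q
  have ht : t + 2 = -1 / κ := by simp only [t, q]; field_simp; ring
  have ht2 : t < -2 := by linarith [div_neg_of_neg_of_pos neg_one_lt_zero hκ]
  have hpow : EqOn (fun x => ((1 / σ) * (1 + κ * x / σ) ^ (-(1 + κ) / κ)) ^ q)
      (fun x => (1 / σ) ^ q * (1 + κ / σ * x) ^ t) (Ioi 0) := fun x hx =>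
    coupledExp_rpow hσ.le (by linarith [div_pos (mul_pos hκ (mem_Ioi.mp hx)) hσ]) q
  have hmoment : EqOn (fun x => x * ((1 / σ) * (1 + κ * x / σ) ^ (-(1 + κ) / κ)) ^ q)
      (fun x => (1 / σ) ^ q * (x * (1 + κ / σ * x) ^ t)) (Ioi 0) := fun x hx => by
    have h := hpow hx
    dsimp only at h ⊢
    rw [h, mul_left_comm]
  rw [setIntegral_congr_fun measurableSet_Ioi hpow, setIntegral_congr_fun measurableSet_Ioi hmoment,
    integral_const_mul, integral_const_mul, mul_div_mul_left _ _ (by positivity),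
    integral_Ioi_mul_one_add_mul_rpow_div_integral (by positivity) ht2, ht]
  field_simp
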